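/- arXiv:2102.09830 — 2 statements merged into one kernel-verified Lean document; each statement's English description precedes it below -/
import Mathlib

section
/- Let X be a locally connected topological space and F a sheaf of abelian groups on X. Let I be the poset of nonempty connected open subsets of X, ordered by reverse inclusion (i ≤ j iff U_i ⊇ U_j). Then the cosections group L(X,F) is naturally isomorphic to the colimit colim_{i∈I} F(U_i). -/
open CategoryTheory CategoryTheory.Limits TopologicalSpace

/-- The functor `F ↦ colim_{i ∈ I} F(U_i)`, where `I` is the poset of nonempty connected open
subsets of `X` ordered by reverse inclusion (so that the transition maps are the restriction
maps `F(U_i) → F(U_j)` for `U_j ⊆ U_i`). -/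
noncomputable def connColimitFunctor (X : TopCat.{u}) :
    TopCat.Sheaf AddCommGrpCat.{u} X ⥤ AddCommGrpCat.{u} :=
  TopCat.Sheaf.forget AddCommGrpCat.{u} X ⋙
    (Functor.whiskeringLeft _ _ AddCommGrpCat.{u}).obj
      (ObjectProperty.ι
        (fun U : Opens X => (U : Set X).Nonempty ∧ IsConnected (U : Set X) :
          ObjectProperty (Opens X))).op ⋙
    colim

/-! Restricting sheaves to the nonempty connected opens is fully faithful, because in a locally
connected space these opens are cover-dense. The constant sheaf `π⁻¹ A` is the sheaf of locally
constant `A`-valued functions, so its restriction to connected opens is the constant diagram `A`.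
Hence `Hom(colim_I F|_I, A) ≃ Hom(F|_I, const A) ≃ Hom(F|_I, (π⁻¹ A)|_I) ≃ Hom(F, π⁻¹ A)`,
naturally in `F` and `A`. -/

universe u

noncomputable section

namespace CategoryTheory.Functor.IsCoverDense

variable {C D : Type*} [Category* C] [Category* D] (G : C ⥤ D) (K : GrothendieckTopology D)
  (A : Type*) [Category* A] [G.IsCoverDense K] [G.IsLocallyFull K]

def fullyFaithfulSheafRestriction :
    (sheafToPresheaf K A ⋙ (whiskeringLeft _ _ A).obj G.op).FullyFaithful :=
  ((FullyFaithful.ofFullyFaithful (G.sheafPushforwardContinuous A (G.inducedTopology K) K)).comp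
    (fullyFaithfulSheafToPresheaf _ A)).ofIso
    (G.sheafPushforwardContinuousCompSheafToPresheafIso A _ K)

end CategoryTheory.Functor.IsCoverDense

def LocallyConstant.constAddEquiv (X Y : Type*) [TopologicalSpace X] [PreconnectedSpace X]
    [Nonempty X] [AddZeroClass Y] : Y ≃+ LocallyConstant X Y :=
  { LocallyConstant.constAddMonoidHom with
    invFun := fun f => f (Classical.arbitrary X)
    left_inv := fun _ => rfl
    right_inv := fun f => (f.eq_const _).symm }

section ConnectedOpens

variable (X : Type*) [TopologicalSpace X]

abbrev connectedOpens : ObjectProperty (Opens X) :=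
  fun U => (U : Set X).Nonempty ∧ IsConnected (U : Set X)

instance isCoverDense_connectedOpens [LocallyConnectedSpace X] :
    (connectedOpens X).ι.IsCoverDense (Opens.grothendieckTopology X) where
  is_cover V x hx := by
    obtain ⟨W, hWV, hWo, hxW, hWc⟩ :=
      locallyConnectedSpace_iff_subsets_isOpen_isConnected.mp ‹_› x V (V.isOpen.mem_nhds hx)
    exact ⟨⟨W, hWo⟩, homOfLE hWV, ⟨⟨⟨⟨W, hWo⟩, hWc.nonempty, hWc⟩, 𝟙 _, homOfLE hWV, rfl⟩⟩, hxW⟩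

variable {X}

instance (U : (connectedOpens X).FullSubcategory) : Nonempty U.obj :=
  U.property.1.to_subtype

instance (U : (connectedOpens X).FullSubcategory) : PreconnectedSpace U.obj :=
  Subtype.preconnectedSpace U.property.2.isPreconnected

end ConnectedOpens

namespace TopCat

variable (X : TopCat.{u})

def locallyConstantPresheaf (A : AddCommGrpCat.{u}) : X.Presheaf AddCommGrpCat.{u} where
  obj U := AddCommGrpCat.of (LocallyConstant U.unop A)
  map f := AddCommGrpCat.ofHom (LocallyConstant.comapAddMonoidHom
    ⟨Set.inclusion f.unop.le, continuous_inclusion f.unop.le⟩)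

/-- Locally constant maps into `A` are the continuous maps for the discrete topology on `A`. -/
theorem isSheaf_locallyConstantPresheaf (A : AddCommGrpCat.{u}) :
    (locallyConstantPresheaf X A).IsSheaf := by
  let _ : TopologicalSpace A := ⊥
  have : DiscreteTopology A := ⟨rfl⟩
  rw [Presheaf.isSheaf_iff_isSheaf_comp (forget AddCommGrpCat)]
  refine Presheaf.isSheaf_of_iso (F := (sheafToTop (X := X) (TopCat.of A)).presheaf)
    (NatIso.ofComponents (fun U => Equiv.toIso
      { toFun := fun f => (⟨f.hom, (IsLocallyConstant.iff_continuous _).2 f.hom.continuous⟩ :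
          LocallyConstant U.unop A)
        invFun := fun f => TopCat.ofHom f.toContinuousMap
        left_inv := fun _ => rfl
        right_inv := fun _ => rfl }) (fun _ => rfl)) (sheafToTop _).property

def locallyConstantSheaf :
    AddCommGrpCat.{u} ⥤ CategoryTheory.Sheaf (Opens.grothendieckTopology X) AddCommGrpCat.{u} where
  obj A := ⟨locallyConstantPresheaf X A, isSheaf_locallyConstantPresheaf X A⟩
  map g := ⟨{ app := fun _ => AddCommGrpCat.ofHom (LocallyConstant.mapAddMonoidHom g.hom) }⟩

def constToLocallyConstant :
    Functor.const (Opens X)ᵒᵖ ⟶ locallyConstantSheaf X ⋙ sheafToPresheaf _ AddCommGrpCat.{u} where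
  app _ := { app := fun _ => AddCommGrpCat.ofHom LocallyConstant.constAddMonoidHom }

instance (A : AddCommGrpCat.{u}) :
    CategoryTheory.Presheaf.IsLocallyInjective (Opens.grothendieckTopology X)
      ((constToLocallyConstant X).app A) where
  equalizerSieve_mem {V} a b h z hz := by
    change LocallyConstant.const V.unop a = LocallyConstant.const _ b at h
    exact ⟨V.unop, 𝟙 _, DFunLike.congr_fun h ⟨z, hz⟩, hz⟩

instance (A : AddCommGrpCat.{u}) :
    CategoryTheory.Presheaf.IsLocallySurjective (Opens.grothendieckTopology X)
      ((constToLocallyConstant X).app A) := by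
  refine (Presheaf.isLocallySurjective_iff _).2 fun V s z hz => ?_
  change LocallyConstant V A at s
  -- the fibre of `s` through `z` is an open neighbourhood of `z` on which `s` is constant
  refine ⟨⟨Subtype.val '' (s ⁻¹' {s ⟨z, hz⟩}), V.isOpen.isOpenMap_subtype_val _
    (s.isLocallyConstant _)⟩, ?_, ⟨s ⟨z, hz⟩, ?_⟩, ⟨z, hz⟩, rfl, rfl⟩
  · rintro _ ⟨w, -, rfl⟩
    exact w.2
  · refine LocallyConstant.ext fun ⟨_, w, hw, hwz⟩ => ?_
    subst hwz
    exact hw.symm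

def constantSheafIsoLocallyConstantSheaf :
    constantSheaf (Opens.grothendieckTopology X) AddCommGrpCat.{u} ≅ locallyConstantSheaf X := by
  let φ : constantSheaf _ _ ⟶ locallyConstantSheaf X :=
    (((sheafificationAdjunction _ _).whiskerRight _).homEquiv _ _).symm (constToLocallyConstant X)
  -- `φ.app A` is the sheafification of `constToLocallyConstant X` at `A`, then the counit
  have (A : AddCommGrpCat.{u}) : IsIso (φ.app A) := by
    have : IsIso ((presheafToSheaf (Opens.grothendieckTopology X) _).map
        ((constToLocallyConstant X).app A)) := by
      rw [← GrothendieckTopology.W_iff]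
      exact GrothendieckTopology.W_of_isLocallyBijective _ _
    exact IsIso.comp_isIso' this inferInstance
  have := NatIso.isIso_of_isIso_app φ
  exact asIso φ

def constIsoLocallyConstantSheafRestrict :
    Functor.const (connectedOpens X).FullSubcategoryᵒᵖ ≅
      X.locallyConstantSheaf ⋙ sheafToPresheaf _ _ ⋙
        (Functor.whiskeringLeft _ _ _).obj (connectedOpens X).ι.op :=
  NatIso.ofComponents fun A => NatIso.ofComponents fun U =>
    (LocallyConstant.constAddEquiv U.unop.obj A).toAddCommGrpIso

end TopCat

end

/-- For a locally connected space `X`, the cosections functor `L(X,-)`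
(the left adjoint of the constant-sheaf functor) is naturally isomorphic to
`F ↦ colim_{i ∈ I} F(U_i)` over the poset `I` of nonempty connected open subsets of `X`
ordered by reverse inclusion; equivalently, the latter functor is left adjoint to the
constant-sheaf functor `π⁻¹ : Ab ⥤ Shv(X, Ab)`. -/
theorem connColimitFunctor_is_cosections (X : TopCat.{u}) [LocallyConnectedSpace X] :
    Nonempty (connColimitFunctor X ⊣
      constantSheaf (Opens.grothendieckTopology X) AddCommGrpCat.{u}) :=
  ⟨colimConstAdj.restrictFullyFaithful
    (Functor.IsCoverDense.fullyFaithfulSheafRestriction (connectedOpens X).ι _ _)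
    (Functor.FullyFaithful.id _) (Iso.refl _)
    (X.constIsoLocallyConstantSheafRestrict ≪≫
      Functor.isoWhiskerRight X.constantSheafIsoLocallyConstantSheaf.symm _)⟩
end

section
/- Let X be a locally connected space and F a sheaf of abelian groups on X. Define cos(F)(U) := L(U, F|_U) for open U ⊆ X, with corestriction maps induced by the covariant functoriality of cosections along open inclusions. Then cos(F) is a cosheaf: for every open U and every open cover U = ⋃_i U_i, the sequence ⊕_{i,j} cos(F)(U_i ∩ U_j) → ⊕_i cos(F)(U_i) → cos(F)(U) → 0 is exact. -/
/-!
`cos(F)(U)` is generated by the images of the groups `F(W)`, `W ⊆ U` connected, and by local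
connectedness every such `W` contains a connected piece `C ⊆ W ∩ Uᵢ`, so the corestriction
`⊕ᵢ cos(F)(Uᵢ) → cos(F)(U)` is onto. For exactness in the middle we invert the induced map on
the cokernel `Q` of `⊕_{i,j} cos(F)(Uᵢ ∩ Uⱼ) → ⊕ᵢ cos(F)(Uᵢ)`: a section `s ∈ F(W)` is sent to
the class of `s|_C` in the `i`-th summand, for any piece `C ⊆ W ∩ Uᵢ`. Two pieces that meet
contain a common connected piece of some `Uᵢ ∩ Uⱼ`, on which the two classes agree in `Q`;
since `W` is connected, the class does not depend on the piece.
-/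

open CategoryTheory CategoryTheory.Limits TopologicalSpace Opposite

noncomputable section

abbrev Shv (X : TopCat.{u}) := TopCat.Sheaf AddCommGrpCat.{u} X

variable {X : TopCat.{u}}

/-- connected nonempty opens contained in `U` -/
abbrev ConnIn (X : TopCat.{u}) (U : Opens X) : Type u :=
  ObjectProperty.FullSubcategory (fun W : Opens X => W ≤ U ∧ (W : Set X).Nonempty ∧ IsConnected (W : Set X))

def dgm (F : Shv X) (U : Opens X) : (ConnIn X U)ᵒᵖ ⥤ AddCommGrpCat.{u} :=
  (ObjectProperty.ι _).op ⋙ F.val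

def connInMap {V U : Opens X} (h : V ≤ U) : ConnIn X V ⥤ ConnIn X U :=
  ObjectProperty.ιOfLE (fun W hw => ⟨le_trans hw.1 h, hw.2⟩)

/-- The associated precosheaf of a sheaf `F`:
`cos(F)(U) = L(U, F|_U) = colim_{W ⊆ U connected nonempty} F(W)`. -/
def cosPre (F : Shv X) : Opens X ⥤ AddCommGrpCat.{u} where
  obj U := colimit (dgm F U)
  map {V U} h := colimit.pre (dgm F U) (connInMap h.le).op
  map_id U := by
    apply colimit.hom_ext (F := dgm F U)
    intro j
    rw [Category.comp_id]
    exact colimit.ι_pre (dgm F U) (connInMap le_rfl).op j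
  map_comp {V W U} h h' := by
    apply colimit.hom_ext (F := dgm F V)
    intro j
    have A : colimit.ι (dgm F V) j ≫ colimit.pre (dgm F U) (connInMap (leOfHom (h ≫ h'))).op =
        colimit.ι (dgm F U) ((connInMap (leOfHom (h ≫ h'))).op.obj j) :=
      colimit.ι_pre (dgm F U) (connInMap (leOfHom (h ≫ h'))).op j
    have B : colimit.ι (dgm F V) j ≫ colimit.pre (dgm F W) (connInMap (leOfHom h)).op =
        colimit.ι (dgm F W) ((connInMap (leOfHom h)).op.obj j) :=
      colimit.ι_pre (dgm F W) (connInMap (leOfHom h)).op j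
    have C : colimit.ι (dgm F W) ((connInMap (leOfHom h)).op.obj j) ≫
        colimit.pre (dgm F U) (connInMap (leOfHom h')).op =
        colimit.ι (dgm F U) ((connInMap (leOfHom h')).op.obj ((connInMap (leOfHom h)).op.obj j)) :=
      colimit.ι_pre (dgm F U) (connInMap (leOfHom h')).op _
    exact A.trans (C.symm.trans ((congrArg
      (fun f => f ≫ colimit.pre (dgm F U) (connInMap (leOfHom h')).op) B).symm.trans
      (Category.assoc _ _ _)))



variable {X : TopCat.{u}}

/-- A precosheaf (of abelian groups) on `X` is a covariant functor on open subsets. -/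
abbrev Precosheaf (X : TopCat.{u}) := Opens X ⥤ AddCommGrpCat.{u}

/-- The map `⊕_i Q(U_i) → Q(U)` for a cover `U = ⨆ U_i`, given by the corestrictions. -/
def coverSum (Q : Precosheaf X) {ι : Type u} [DecidableEq ι] (V : ι → Opens X) :
    (DirectSum ι (fun i => (Q.obj (V i) : Type u))) →+ Q.obj (⨆ i, V i) :=
  DirectSum.toAddMonoid fun i => (Q.map (homOfLE (le_iSup V i))).hom

/-- The map `⊕_{i,j} Q(U_i ∩ U_j) → ⊕_i Q(U_i)`, given on the `(i,j)` component by the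
difference of the corestrictions into the `i`-th and `j`-th summands. -/
def coverDiff (Q : Precosheaf X) {ι : Type u} [DecidableEq ι] (V : ι → Opens X) :
    (DirectSum (ι × ι) (fun p => (Q.obj (V p.1 ⊓ V p.2) : Type u))) →+ DirectSum ι (fun i => (Q.obj (V i) : Type u)) :=
  DirectSum.toAddMonoid fun p =>
    ((DirectSum.of (fun i => (Q.obj (V i) : Type u)) p.1).comp
        ((Q.map (homOfLE inf_le_left)).hom : Q.obj (V p.1 ⊓ V p.2) →+ Q.obj (V p.1))) -
    ((DirectSum.of (fun i => (Q.obj (V i) : Type u)) p.2).comp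
        ((Q.map (homOfLE inf_le_right)).hom : Q.obj (V p.1 ⊓ V p.2) →+ Q.obj (V p.2)))

/-- A precosheaf is a cosheaf if for every open cover `U = ⨆ᵢ Uᵢ` the sequence
`⊕_{i,j} Q(U_i ∩ U_j) → ⊕_i Q(U_i) → Q(U) → 0` is exact. -/
def IsCosheaf (Q : Precosheaf X) : Prop :=
  ∀ (ι : Type u) (_ : DecidableEq ι) (V : ι → Opens X),
    Function.Surjective (coverSum Q V) ∧
    AddMonoidHom.range (coverDiff Q V) = AddMonoidHom.ker (coverSum Q V)

theorem exists_connIn_mem {X : TopCat.{u}} [LocallyConnectedSpace X] {A : Opens X} {x : X}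
    (hx : x ∈ A) : ∃ E : ConnIn X A, x ∈ E.obj := by
  obtain ⟨E, hEA, hEo, hxE, hE⟩ :=
    locallyConnectedSpace_iff_subsets_isOpen_isConnected.mp ‹_› x A (A.isOpen.mem_nhds hx)
  exact ⟨⟨⟨E, hEo⟩, hEA, ⟨x, hxE⟩, hE⟩, hxE⟩

theorem IsPreconnected.eq_of_eq_of_inter_nonempty {X β ι : Type*} [TopologicalSpace X]
    {W : Set X} (hW : IsPreconnected W) {C : ι → Set X} (hCo : ∀ a, IsOpen (C a))
    (hCW : ∀ a, C a ⊆ W) (hWC : W ⊆ ⋃ a, C a) (g : ι → β)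
    (hg : ∀ a b, (C a ∩ C b).Nonempty → g a = g b) {a b : ι} (ha : (C a).Nonempty)
    (hb : (C b).Nonempty) : g a = g b := by
  have hsub : W ⊆ ⋃ c ∈ {c | g c = g a}, C c := by
    refine hW.subset_left_of_subset_union (v := ⋃ c ∈ {c | g c ≠ g a}, C c)
      (isOpen_biUnion fun c _ => hCo c) (isOpen_biUnion fun c _ => hCo c) ?_ ?_ ?_
    · refine Set.disjoint_left.mpr fun x hx hx' => ?_
      obtain ⟨c, hc, hxc⟩ := Set.mem_iUnion₂.mp hx
      obtain ⟨d, hd, hxd⟩ := Set.mem_iUnion₂.mp hx'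
      exact hd (hc ▸ (hg c d ⟨x, hxc, hxd⟩).symm)
    · intro x hx
      obtain ⟨c, hxc⟩ := Set.mem_iUnion.mp (hWC hx)
      by_cases hc : g c = g a
      exacts [Or.inl (Set.mem_biUnion hc hxc), Or.inr (Set.mem_biUnion hc hxc)]
    · obtain ⟨x, hx⟩ := ha
      exact ⟨x, hCW a hx, Set.mem_biUnion rfl hx⟩
  obtain ⟨x, hx⟩ := hb
  obtain ⟨c, hc, hxc⟩ := Set.mem_iUnion₂.mp (hsub (hCW b hx))
  exact hc.symm.trans (hg c b ⟨x, hxc, hx⟩)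

section CoverQuotient

variable {X : TopCat.{u}} (Q : Precosheaf X) {ι : Type u} [DecidableEq ι] (V : ι → Opens X)

theorem coverSum_comp_coverDiff : (coverSum Q V).comp (coverDiff Q V) = 0 := by
  refine DirectSum.addHom_ext fun p c => ?_
  have corestrict_comp {A B : Opens X} (h₁ : A ≤ B) (h₂ : B ≤ ⨆ i, V i) (c : Q.obj A) :
      Q.map (homOfLE h₂) (Q.map (homOfLE h₁) c) = Q.map (homOfLE (h₁.trans h₂)) c := by
    rw [← ConcreteCategory.comp_apply, ← Q.map_comp, homOfLE_comp]
  simp only [coverDiff, coverSum, AddMonoidHom.comp_apply, DirectSum.toAddMonoid_of,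
    AddMonoidHom.sub_apply, map_sub, corestrict_comp, sub_self, AddMonoidHom.zero_apply]

abbrev CoverQuot : Type u :=
  (DirectSum ι fun i => (Q.obj (V i) : Type u)) ⧸ (coverDiff Q V).range

def coverLift : CoverQuot Q V →+ Q.obj (⨆ i, V i) :=
  QuotientAddGroup.lift _ (coverSum Q V)
    ((AddMonoidHom.range_le_ker_iff _ _).mpr (coverSum_comp_coverDiff Q V))

theorem coverLift_mk (y : DirectSum ι fun i => (Q.obj (V i) : Type u)) :
    coverLift Q V (QuotientAddGroup.mk y) = coverSum Q V y :=
  rfl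

theorem coverSum_exact_of_bijective (h : Function.Bijective (coverLift Q V)) :
    Function.Surjective (coverSum Q V) ∧ (coverDiff Q V).range = (coverSum Q V).ker := by
  have hfac : coverSum Q V = (coverLift Q V).comp (QuotientAddGroup.mk' _) := rfl
  refine ⟨hfac ▸ h.2.comp (QuotientAddGroup.mk'_surjective _), ?_⟩
  rw [hfac, AddMonoidHom.ker_comp_of_injective _ _ h.1, QuotientAddGroup.ker_mk']

end CoverQuotient

section Cosections

variable {X : TopCat.{u}} (F : Shv X)

theorem colimit_ι_dgm_eq_res {A : Opens X} (C C' : ConnIn X A) (h : C'.obj ≤ C.obj)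
    (t : F.obj.obj (op C.obj)) :
    colimit.ι (dgm F A) (op C) t = colimit.ι (dgm F A) (op C') (F.obj.map (homOfLE h).op t) :=
  (ConcreteCategory.congr_hom (colimit.w (dgm F A) (ObjectProperty.homMk (homOfLE h)).op) t).symm

theorem cosPre_map_colimit_ι {A B : Opens X} (h : A ≤ B) (C : ConnIn X A)
    (t : F.obj.obj (op C.obj)) :
    (cosPre F).map (homOfLE h) (colimit.ι (dgm F A) (op C) t) =
      colimit.ι (dgm F B) (op ((connInMap h).obj C)) t :=
  ConcreteCategory.congr_hom (colimit.ι_pre (dgm F B) (connInMap h).op (op C)) t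

theorem colimit_addHom_ext {J : Type u} [SmallCategory J] {D : J ⥤ AddCommGrpCat.{u}}
    {G : Type u} [AddCommGroup G] {f g : ToType (colimit D) →+ G}
    (h : ∀ j x, f (colimit.ι D j x) = g (colimit.ι D j x)) : f = g :=
  congrArg AddCommGrpCat.Hom.hom <| colimit.hom_ext (f := AddCommGrpCat.ofHom f)
    (f' := AddCommGrpCat.ofHom g) fun j => AddCommGrpCat.ext (h j)

variable {ι : Type u} [DecidableEq ι] (V : ι → Opens X)

def coverGen (i : ι) (C : ConnIn X (V i)) : F.obj.obj (op C.obj) →+ CoverQuot (cosPre F) V :=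
  (QuotientAddGroup.mk' _).comp <|
    (DirectSum.of (fun i => ((cosPre F).obj (V i) : Type u)) i).comp
      (colimit.ι (dgm F (V i)) (op C)).hom

theorem coverGen_eq_res (i : ι) (C C' : ConnIn X (V i)) (h : C'.obj ≤ C.obj)
    (t : F.obj.obj (op C.obj)) :
    coverGen F V i C t = coverGen F V i C' (F.obj.map (homOfLE h).op t) :=
  congrArg (fun x => QuotientAddGroup.mk' _ (DirectSum.of _ i x))
    (colimit_ι_dgm_eq_res F C C' h t)

theorem coverGen_congr_index {i j : ι} (C : Opens X) (hi : C ≤ V i) (hj : C ≤ V j)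
    (hC : (C : Set X).Nonempty ∧ IsConnected (C : Set X)) (t : F.obj.obj (op C)) :
    coverGen F V i ⟨C, hi, hC⟩ t = coverGen F V j ⟨C, hj, hC⟩ t := by
  refine (QuotientAddGroup.eq_iff_sub_mem).mpr ⟨DirectSum.of _ (i, j)
    (colimit.ι (dgm F (V i ⊓ V j)) (op ⟨C, le_inf hi hj, hC⟩) t), ?_⟩
  let Cij : ConnIn X (V i ⊓ V j) := ⟨C, le_inf hi hj, hC⟩
  exact (DirectSum.toAddMonoid_of _ (i, j) _).trans <|
    congrArg₂ (fun a b => DirectSum.of (fun i => ((cosPre F).obj (V i) : Type u)) i a -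
      DirectSum.of (fun i => ((cosPre F).obj (V i) : Type u)) j b)
    (cosPre_map_colimit_ι F inf_le_left Cij t) (cosPre_map_colimit_ι F inf_le_right Cij t)

theorem coverLift_coverGen (i : ι) (C : ConnIn X (V i)) (t : F.obj.obj (op C.obj)) :
    coverLift (cosPre F) V (coverGen F V i C t) =
      colimit.ι (dgm F (⨆ i, V i)) (op ((connInMap (le_iSup V i)).obj C)) t := by
  rw [coverGen, AddMonoidHom.comp_apply, QuotientAddGroup.mk'_apply, coverLift_mk]
  exact (DirectSum.toAddMonoid_of _ i _).trans (cosPre_map_colimit_ι F (le_iSup V i) C t)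

end Cosections

section Inverse

variable {X : TopCat.{u}} (F : Shv X) {ι : Type u} (V : ι → Opens X)

abbrev ConnPiece (W : Opens X) : Type u :=
  Σ i, {C : ConnIn X (V i) // C.obj ≤ W}

theorem exists_connPiece_mem [LocallyConnectedSpace X] {W : Opens X} (hW : W ≤ ⨆ i, V i)
    {x : X} (hx : x ∈ W) : ∃ a : ConnPiece V W, x ∈ a.2.1.obj := by
  obtain ⟨i, hxi⟩ := Opens.mem_iSup.mp (hW hx)
  obtain ⟨E, hxE⟩ := exists_connIn_mem (A := W ⊓ V i) ⟨hx, hxi⟩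
  exact ⟨⟨i, (connInMap inf_le_right).obj E, E.2.1.trans inf_le_left⟩, hxE⟩

variable [DecidableEq ι]

variable {F V} in
def ConnPiece.gen {W : Opens X} (a : ConnPiece V W) :
    F.obj.obj (op W) →+ CoverQuot (cosPre F) V :=
  (coverGen F V a.1 a.2.1).comp (F.obj.map (homOfLE a.2.2).op).hom

theorem ConnPiece.gen_eq_coverGen_res {W : Opens X} (a : ConnPiece V W) (E : ConnIn X (V a.1))
    (hE : E.obj ≤ a.2.1.obj) (s : F.obj.obj (op W)) :
    a.gen s = coverGen F V a.1 E (F.obj.map (homOfLE (hE.trans a.2.2)).op s) := by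
  rw [ConnPiece.gen, AddMonoidHom.comp_apply, coverGen_eq_res F V a.1 _ E hE]
  exact congrArg _ (TopCat.Presheaf.restrict_restrict (F := F.obj) hE a.2.2 s)

theorem ConnPiece.gen_eq_of_mem [LocallyConnectedSpace X] {W : Opens X} {a b : ConnPiece V W}
    {x : X} (ha : x ∈ a.2.1.obj) (hb : x ∈ b.2.1.obj) : a.gen (F := F) = b.gen := by
  ext s
  obtain ⟨E, -⟩ := exists_connIn_mem (A := a.2.1.obj ⊓ b.2.1.obj) ⟨ha, hb⟩
  have hEa : E.obj ≤ a.2.1.obj := E.2.1.trans inf_le_left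
  have hEb : E.obj ≤ b.2.1.obj := E.2.1.trans inf_le_right
  have hEi : E.obj ≤ V a.1 := hEa.trans a.2.1.2.1
  have hEj : E.obj ≤ V b.1 := hEb.trans b.2.1.2.1
  rw [a.gen_eq_coverGen_res F V ⟨E.obj, hEi, E.2.2⟩ hEa,
    b.gen_eq_coverGen_res F V ⟨E.obj, hEj, E.2.2⟩ hEb]
  exact coverGen_congr_index F V E.obj hEi hEj E.2.2 _

theorem ConnPiece.gen_eq [LocallyConnectedSpace X] {W : Opens X} (hW : W ≤ ⨆ i, V i)
    (hWc : IsPreconnected (W : Set X)) (a b : ConnPiece V W) : a.gen (F := F) = b.gen :=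
  hWc.eq_of_eq_of_inter_nonempty (C := fun a : ConnPiece V W => (a.2.1.obj : Set X))
    (fun a => a.2.1.obj.isOpen) (fun a => a.2.2)
    (fun _ hx => Set.mem_iUnion.mpr (exists_connPiece_mem V hW hx)) (fun a => a.gen)
    (fun _ _ ⟨_, ha, hb⟩ => ConnPiece.gen_eq_of_mem F V ha hb) a.2.1.2.2.1 b.2.1.2.2.1

variable [LocallyConnectedSpace X]

def coverLiftInvApp (W : ConnIn X (⨆ i, V i)) : F.obj.obj (op W.obj) →+ CoverQuot (cosPre F) V :=
  (exists_connPiece_mem V W.2.1 W.2.2.1.some_mem).choose.gen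

theorem coverLiftInvApp_eq (W : ConnIn X (⨆ i, V i)) (a : ConnPiece V W.obj) :
    coverLiftInvApp F V W = a.gen :=
  ConnPiece.gen_eq F V W.2.1 W.2.2.2.isPreconnected _ a

def coverLiftInvCocone : Cocone (dgm F (⨆ i, V i)) where
  pt := AddCommGrpCat.of (CoverQuot (cosPre F) V)
  ι :=
    { app := fun W => AddCommGrpCat.ofHom (coverLiftInvApp F V W.unop)
      naturality := fun W W' f => by
        have hle : W'.unop.obj ≤ W.unop.obj := f.unop.hom.le
        obtain ⟨a, -⟩ := exists_connPiece_mem V W'.unop.2.1 W'.unop.2.2.1.some_mem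
        ext s
        change coverLiftInvApp F V W'.unop (F.obj.map (homOfLE hle).op s) =
          coverLiftInvApp F V W.unop s
        rw [coverLiftInvApp_eq F V _ a, coverLiftInvApp_eq F V _ ⟨a.1, a.2.1, a.2.2.trans hle⟩]
        exact congrArg (coverGen F V a.1 a.2.1)
          (TopCat.Presheaf.restrict_restrict (F := F.obj) a.2.2 hle s) }

def coverLiftInv : (cosPre F).obj (⨆ i, V i) ⟶ AddCommGrpCat.of (CoverQuot (cosPre F) V) :=
  colimit.desc (dgm F (⨆ i, V i)) (coverLiftInvCocone F V)

theorem coverLiftInv_colimit_ι (W : ConnIn X (⨆ i, V i)) (a : ConnPiece V W.obj)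
    (s : F.obj.obj (op W.obj)) :
    coverLiftInv F V (colimit.ι (dgm F (⨆ i, V i)) (op W) s) = a.gen s := by
  rw [← coverLiftInvApp_eq F V W a]
  exact ConcreteCategory.congr_hom (colimit.ι_desc (coverLiftInvCocone F V) (op W)) s

theorem coverLiftInv_comp_coverLift :
    (coverLiftInv F V).hom.comp (coverLift (cosPre F) V) = AddMonoidHom.id _ := by
  refine QuotientAddGroup.addMonoidHom_ext _ <| DirectSum.addHom_ext' fun i =>
    colimit_addHom_ext fun C (t : F.obj.obj (op C.unop.obj)) => ?_
  change coverLiftInv F V (coverLift _ V (coverGen F V i C.unop t)) = coverGen F V i C.unop t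
  rw [coverLift_coverGen]
  refine (coverLiftInv_colimit_ι F V ((connInMap (le_iSup V i)).obj C.unop)
    ⟨i, C.unop, le_rfl⟩ t).trans ?_
  exact congrArg (coverGen F V i C.unop) (TopCat.Presheaf.restrict_self (F := F.obj) t)

theorem coverLift_comp_coverLiftInv :
    (coverLift (cosPre F) V).comp (coverLiftInv F V).hom = AddMonoidHom.id _ := by
  refine colimit_addHom_ext fun W (s : F.obj.obj (op W.unop.obj)) => ?_
  obtain ⟨a, -⟩ := exists_connPiece_mem V W.unop.2.1 W.unop.2.2.1.some_mem
  change coverLift _ V (coverLiftInv F V (colimit.ι (dgm F (⨆ i, V i)) (op W.unop) s)) = _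
  rw [coverLiftInv_colimit_ι F V W.unop a, ConnPiece.gen, AddMonoidHom.comp_apply,
    coverLift_coverGen]
  exact (colimit_ι_dgm_eq_res F W.unop _ a.2.2 s).symm

theorem bijective_coverLift_cosPre : Function.Bijective (coverLift (cosPre F) V) :=
  Function.bijective_iff_has_inverse.mpr ⟨coverLiftInv F V,
    DFunLike.congr_fun (coverLiftInv_comp_coverLift F V),
    DFunLike.congr_fun (coverLift_comp_coverLiftInv F V)⟩

end Inverse

/-- Let `X` be locally connected and `F` a sheaf of abelian groups on `X`.
The associated precosheaf `cos(F)(U) = L(U, F|_U)` (here realized by the explicit formula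
`L(U, F|_U) = colim_{W ⊆ U connected nonempty} F(W)` for the cosections functor, with
corestrictions induced by covariant functoriality) is a cosheaf: for every open cover
`U = ⋃ᵢ Uᵢ` the sequence `⊕_{i,j} cos(F)(Uᵢ ∩ Uⱼ) → ⊕ᵢ cos(F)(Uᵢ) → cos(F)(U) → 0`
is exact. -/
theorem cosPre_isCosheaf (X : TopCat.{u}) [LocallyConnectedSpace X] (F : Shv X) :
    IsCosheaf (cosPre F) := fun _ _ V =>
  coverSum_exact_of_bijective _ V (bijective_coverLift_cosPre F V)
end
end
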